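/- arXiv:math/0505122 — 3 statements merged into one kernel-verified Lean document; each statement's English description precedes it below -/
import Mathlib

section
/- Let f(z1,z2) = z1 * conj(z2)^2 on the unit sphere in C^2. For every complex line L tangent to the sphere of radius sqrt(1/3) centered at 0, and every (1,0)-form alpha with constant coefficients, the integral of f*alpha over L intersected with the unit sphere equals 0, yet f does not extend holomorphically to the unit ball. -/
/-!
On a circle `|w| = r` one has `conj w = r² w⁻¹`, so along the circle `w ↦ p + w • v` the
function `f z = z₀ · conj z₁ ^ 2` is a Laurent polynomial in `w`, and its Morera integral is
`2πi` times the coefficient of `w⁻¹`, namely `r² conj v₁ (2 p₀ conj p₁ + r² v₀ conj v₁)`.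
For a line tangent at `p` to the sphere of radius `√(1/3)`, with unit direction `v ⊥ p`, the
circle has radius `r = √(2/3)`, and orthogonality forces `p₀ conj p₁ = -v₀ conj v₁ / 3`, so the
coefficient vanishes.

On the other hand, on the line through a unit vector `u` we have `f (w • u) = f u · w⁻¹` for
`|w| = 1`, so `∮ f (w • u) dw = 2πi f u`, which is nonzero for `u = (1/√2, 1/√2)`. A holomorphic
extension of `f` to the ball would make this integral vanish by Cauchy's theorem.
-/

open Metric Complex
open scoped ComplexConjugate Real

lemma conj_eq_sq_mul_inv_of_mem_sphere {R : ℝ} {w : ℂ} (hw : w ∈ sphere (0 : ℂ) R) :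
    conj w = R ^ 2 * w⁻¹ := by
  rw [mem_sphere_zero_iff_norm] at hw
  rcases eq_or_ne w 0 with rfl | hw0
  · simp
  · rw [← hw, ← mul_conj']
    field_simp

theorem intervalIntegral_eq_circleIntegral (F : ℂ → ℂ) (R : ℝ) :
    ∫ θ in (0 : ℝ)..2 * π, F (R * exp (θ * I)) * (R * I * exp (θ * I)) =
      ∮ z in C(0, R), F z := by
  refine intervalIntegral.integral_congr fun θ _ => ?_
  simp only [deriv_circleMap, circleMap_zero, smul_eq_mul]
  ring

theorem circleIntegral_sum_zpow {ι : Type*} (s : Finset ι) (a : ι → ℂ) (n : ι → ℤ) {R : ℝ}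
    (hR : 0 < R) :
    ∮ z in C(0, R), ∑ i ∈ s, a i * z ^ n i = 2 * π * I * ∑ i ∈ s with n i = -1, a i := by
  have hzero : (0 : ℂ) ∉ sphere (0 : ℂ) |R| := by simpa using (abs_pos.2 hR.ne').ne
  rw [circleIntegral.integral_fun_sum fun i _ => ?integrable, Finset.sum_filter, Finset.mul_sum]
  case integrable =>
    have h := (circleIntegrable_sub_zpow_iff (n := n i)).2 (Or.inr (Or.inr hzero))
    simp only [sub_zero] at h
    exact h.const_smul (a := a i)
  refine Finset.sum_congr rfl fun i _ => ?_
  rw [circleIntegral.integral_const_mul]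
  split_ifs with hn
  · have h := circleIntegral.integral_sub_inv_of_mem_ball (mem_ball_self hR) (c := 0)
    simp only [sub_zero] at h
    simp_rw [hn, zpow_neg_one, h]
    ring
  · have h := circleIntegral.integral_sub_zpow_of_ne hn 0 0 R
    simp only [sub_zero] at h
    rw [h, mul_zero, mul_zero]

theorem circleIntegral_comp_smul_eq_zero {E F : Type*} [NormedAddCommGroup E] [NormedSpace ℂ E]
    [NormedAddCommGroup F] [NormedSpace ℂ F] {g : E → F} {R : ℝ} (hR : 0 ≤ R)
    (hgc : ContinuousOn g (closedBall 0 R)) (hgd : DifferentiableOn ℂ g (ball 0 R)) {u : E}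
    (hu : ‖u‖ ≤ 1) : ∮ z in C(0, R), g (z • u) = 0 := by
  have hnorm (z : ℂ) : ‖z • u‖ ≤ ‖z‖ := by
    simpa [norm_smul] using mul_le_of_le_one_right (norm_nonneg z) hu
  refine circleIntegral_eq_zero_of_differentiable_on_off_countable hR Set.countable_empty
    (hgc.comp (continuous_id.smul continuous_const).continuousOn fun z hz => ?_)
    fun z hz => ?_
  · simpa using (hnorm z).trans (by simpa using hz)
  · have hzu : z • u ∈ ball 0 R := by simpa using (hnorm z).trans_lt (by simpa using hz.1)
    exact (hgd.differentiableAt (isOpen_ball.mem_nhds hzu)).comp z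
      (differentiableAt_id.smul_const u)

namespace EuclideanSpace

lemma inner_fin_two (p v : EuclideanSpace ℂ (Fin 2)) :
    inner ℂ p v = conj (p 0) * v 0 + conj (p 1) * v 1 := by
  simp [PiLp.inner_apply, Fin.sum_univ_two, mul_comm]

lemma norm_sq_fin_two (v : EuclideanSpace ℂ (Fin 2)) :
    (‖v‖ : ℂ) ^ 2 = conj (v 0) * v 0 + conj (v 1) * v 1 := by
  rw [← inner_fin_two, inner_self_eq_norm_sq_to_K]; rfl

-- In `ℂ²` the orthogonal complement of `v` is the line through `(-conj v₁, conj v₀)`.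
theorem mul_conj_of_inner_eq_zero {p v : EuclideanSpace ℂ (Fin 2)} (h : inner ℂ p v = 0) :
    p 0 * conj (p 1) * ‖v‖ ^ 2 = -(‖p‖ ^ 2 * (v 0 * conj (v 1))) := by
  rw [inner_fin_two] at h
  have h' : p 0 * conj (v 0) + p 1 * conj (v 1) = 0 := by
    simpa [mul_comm] using congrArg conj h
  rw [norm_sq_fin_two, norm_sq_fin_two]
  linear_combination conj (p 1) * v 0 * h' + p 0 * conj (v 1) * h

end EuclideanSpace

def globevnikStout (z : EuclideanSpace ℂ (Fin 2)) : ℂ := z 0 * conj (z 1) ^ 2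

theorem circleIntegral_globevnikStout_add_smul (p v : EuclideanSpace ℂ (Fin 2)) {r : ℝ}
    (hr : 0 < r) :
    ∮ w in C(0, r), globevnikStout (p + w • v) =
      2 * π * I * (r ^ 2 * conj (v 1) * (2 * p 0 * conj (p 1) + r ^ 2 * v 0 * conj (v 1))) := by
  let a : Fin 4 → ℂ := ![v 0 * conj (p 1) ^ 2,
    p 0 * conj (p 1) ^ 2 + 2 * r ^ 2 * v 0 * conj (p 1) * conj (v 1),
    r ^ 2 * conj (v 1) * (2 * p 0 * conj (p 1) + r ^ 2 * v 0 * conj (v 1)),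
    r ^ 4 * p 0 * conj (v 1) ^ 2]
  have hlaurent : Set.EqOn (fun w => globevnikStout (p + w • v))
      (fun w => ∑ i, a i * w ^ ![(1 : ℤ), 0, -1, -2] i) (sphere 0 r) := by
    intro w hw
    have hw0 : w ≠ 0 := ne_zero_of_mem_sphere hr.ne' ⟨w, hw⟩
    simp only [globevnikStout, PiLp.add_apply, PiLp.smul_apply, smul_eq_mul, map_add, map_mul,
      conj_eq_sq_mul_inv_of_mem_sphere hw, Fin.sum_univ_four, Matrix.cons_val_zero, zpow_ofNat,
      pow_one, Matrix.cons_val_one, pow_zero, mul_one, Matrix.cons_val, zpow_neg, a]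
    field_simp
    ring
  rw [circleIntegral.integral_congr hr.le hlaurent, circleIntegral_sum_zpow _ _ _ hr]
  simp [a, Finset.sum_filter, Fin.sum_univ_four]

theorem circleIntegral_globevnikStout_tangent_line {p v : EuclideanSpace ℂ (Fin 2)}
    (hp : ‖p‖ ^ 2 = 1 / 3) (hv : ‖v‖ = 1) (hpv : inner ℂ p v = 0) :
    ∮ w in C(0, √(2 / 3)), globevnikStout (p + w • v) = 0 := by
  have hr : ((√(2 / 3) : ℝ) : ℂ) ^ 2 = 2 / 3 := by
    rw [← ofReal_pow, Real.sq_sqrt (by norm_num)]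
    push_cast
    ring
  have hp' : (‖p‖ : ℂ) ^ 2 = 1 / 3 := by
    rw [← ofReal_pow, hp]
    push_cast
    ring
  have horth := EuclideanSpace.mul_conj_of_inner_eq_zero hpv
  rw [hv, ofReal_one, one_pow, hp'] at horth
  rw [circleIntegral_globevnikStout_add_smul p v (by positivity), hr]
  linear_combination 2 * π * I * (2 / 3) * conj (v 1) * 2 * horth

lemma globevnikStout_smul (w : ℂ) (u : EuclideanSpace ℂ (Fin 2)) :
    globevnikStout (w • u) = w * conj w ^ 2 * globevnikStout u := by
  simp only [globevnikStout, PiLp.smul_apply, smul_eq_mul, map_mul]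
  ring

theorem circleIntegral_globevnikStout_smul (u : EuclideanSpace ℂ (Fin 2)) :
    ∮ z in C(0, 1), globevnikStout (z • u) = 2 * π * I * globevnikStout u := by
  have hinv : Set.EqOn (fun z => globevnikStout (z • u)) (fun z => globevnikStout u * (z - 0)⁻¹)
      (sphere 0 1) := by
    intro z hz
    have hz0 : z ≠ 0 := ne_zero_of_mem_sphere one_ne_zero ⟨z, hz⟩
    simp only [globevnikStout_smul, conj_eq_sq_mul_inv_of_mem_sphere hz, sub_zero, ofReal_one,
      one_pow, one_mul]
    field_simp
  rw [circleIntegral.integral_congr zero_le_one hinv, circleIntegral.integral_const_mul,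
    circleIntegral.integral_sub_inv_of_mem_ball (mem_ball_self one_pos), mul_comm]

lemma exists_norm_eq_one_globevnikStout_ne_zero :
    ∃ u : EuclideanSpace ℂ (Fin 2), ‖u‖ = 1 ∧ globevnikStout u ≠ 0 := by
  refine ⟨!₂[(√2)⁻¹, (√2)⁻¹], ?_, ?_⟩
  · rw [EuclideanSpace.norm_eq]
    norm_num [Fin.sum_univ_two]
  · simp [globevnikStout]

/-- The Globevnik–Stout counterexample: `f(z₁,z₂) = z₁ · conj(z₂)²` on the unit sphere of
`ℂ²` satisfies the Morera condition on every complex line tangent to the sphere of radius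
`√(1/3)` centered at `0` (such a line is parametrized as `θ ↦ p + √(2/3) e^{iθ} • v` with
`p` the tangency point, `‖p‖² = 1/3`, `v ⊥ p`, `‖v‖ = 1`, and the Morera condition says
that the integral over the circle `L ∩ ∂B` of `f·α` vanishes for every constant-coefficient
`(1,0)`-form `α = a₀ dz₀ + a₁ dz₁`), and yet `f` does not extend holomorphically to the
unit ball. -/
theorem stmt_0 :
    (∀ p v : EuclideanSpace ℂ (Fin 2), ‖p‖ ^ 2 = 1 / 3 → ‖v‖ = 1 →
      (inner ℂ p v : ℂ) = 0 → ∀ a : Fin 2 → ℂ,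
      (∫ θ in (0:ℝ)..(2 * Real.pi),
        ((p + (((Real.sqrt (2/3) : ℝ) : ℂ) * Complex.exp (θ * Complex.I)) • v) 0 *
          (starRingEnd ℂ ((p + (((Real.sqrt (2/3) : ℝ) : ℂ) * Complex.exp (θ * Complex.I)) • v) 1)) ^ 2) *
        ((a 0 * v 0 + a 1 * v 1) *
          (((Real.sqrt (2/3) : ℝ) : ℂ) * Complex.I * Complex.exp (θ * Complex.I)))) = 0)
    ∧ ¬ ∃ g : EuclideanSpace ℂ (Fin 2) → ℂ,
        ContinuousOn g (closedBall (0 : EuclideanSpace ℂ (Fin 2)) 1) ∧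
        DifferentiableOn ℂ g (ball (0 : EuclideanSpace ℂ (Fin 2)) 1) ∧
        ∀ z ∈ sphere (0 : EuclideanSpace ℂ (Fin 2)) 1,
          g z = z 0 * (starRingEnd ℂ (z 1)) ^ 2 := by
  constructor
  · intro p v hp hv hpv a
    have hzero := circleIntegral_globevnikStout_tangent_line hp hv hpv
    rw [← intervalIntegral_eq_circleIntegral] at hzero
    simp_rw [mul_left_comm _ (a 0 * v 0 + a 1 * v 1), intervalIntegral.integral_const_mul]
    exact mul_eq_zero_of_right _ hzero
  · rintro ⟨g, hgc, hgd, hgf⟩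
    obtain ⟨u, hu, hfu⟩ := exists_norm_eq_one_globevnikStout_ne_zero
    have hcauchy := circleIntegral_comp_smul_eq_zero zero_le_one hgc hgd hu.le
    have hslice : Set.EqOn (fun z : ℂ => g (z • u)) (fun z => globevnikStout (z • u)) (sphere 0 1) :=
      fun z hz => hgf _ (by simpa [norm_smul, hu] using hz)
    rw [circleIntegral.integral_congr zero_le_one hslice,
      circleIntegral_globevnikStout_smul] at hcauchy
    simp [hfu, Real.pi_ne_zero] at hcauchy
end

section
/- Let ρ : C^n → R be C^2 with ∂ρ(z) ≠ 0 on {ρ = 0}, and suppose at a point z on {ρ = 0} with the normalization ∂ρ(z) = (1,0,…,0) and z = (0,c,0,…,0), c ≠ 0, the real Hessian of ρ restricted to the complex z_2-line is positive definite. Then the map r : C^n → R^3, r(w) = (ρ(w), Re(∂ρ(w)·w), Im(∂ρ(w)·w)), has derivative of rank 3 at z. -/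
/-!
Write `ℓ = Dρ_z` and `T` for the derivative of `w ↦ ∂ρ(w)·w` at `z`. With `F` the derivative of
`∂ρ/∂w₂` at `z`, the normalization gives `ℓ v = 2 Re v₁` and `T v = v₁ + c F v`. Along the
`z₂`-line, the Hessian is `2 Re (F(u e₂) u)`, so its positivity makes `u ↦ F(u e₂)` an injective,
hence bijective, real-linear endomorphism of `ℂ`. Thus `T` maps the `z₂`-line, on which `ℓ`
vanishes, onto `ℂ`, while `ℓ e₁ ≠ 0`; together these make `(ℓ, Re T, Im T)` onto `ℝ³`.
-/
open Complex ContinuousLinearMap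

section ThreeComponents

variable {E : Type*} [NormedAddCommGroup E] [NormedSpace ℝ E]

theorem hasFDerivAt_vecCons_re_im {f : E → ℝ} {g : E → ℂ} {z : E}
    (hf : DifferentiableAt ℝ f z) (hg : DifferentiableAt ℝ g z) :
    HasFDerivAt (fun w => ![f w, (g w).re, (g w).im])
      (pi ![fderiv ℝ f z, reCLM ∘L fderiv ℝ g z, imCLM ∘L fderiv ℝ g z]) z := by
  refine hasFDerivAt_pi'' fun i => ?_
  fin_cases i
  · exact hf.hasFDerivAt
  · exact reCLM.hasFDerivAt.comp z hg.hasFDerivAt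
  · exact imCLM.hasFDerivAt.comp z hg.hasFDerivAt

theorem surjective_pi_re_im {ℓ : E →L[ℝ] ℝ} {T : E →L[ℝ] ℂ} {e : E} (he : ℓ e ≠ 0)
    (hT : ∀ w, ∃ v, ℓ v = 0 ∧ T v = w) :
    Function.Surjective (pi ![ℓ, reCLM ∘L T, imCLM ∘L T]) := by
  intro y
  set s := y 0 / ℓ e
  obtain ⟨v, hℓv, hTv⟩ := hT (⟨y 1, y 2⟩ - s • T e)
  refine ⟨s • e + v, funext fun i => ?_⟩
  fin_cases i
  · simp [hℓv, s, he]
  · simp [hTv]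
  · simp [hTv]

end ThreeComponents

theorem LinearMap.surjective_of_forall_re_mul_pos (f : ℂ →ₗ[ℝ] ℂ)
    (hf : ∀ u ≠ 0, 0 < (f u * u).re) : Function.Surjective f :=
  LinearMap.injective_iff_surjective.mp <| (injective_iff_map_eq_zero f).2 fun u hu => by
    by_contra h
    simpa [hu] using hf u h

section Coordinates

variable {ι : Type*} [Fintype ι]

theorem fderiv_sum_mul_apply {g : (ι → ℂ) → ι → ℂ} {z : ι → ℂ}
    (hg : DifferentiableAt ℝ g z) (v : ι → ℂ) :
    fderiv ℝ (fun w => ∑ j, g w j * w j) z v =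
      ∑ j, (g z j * v j + z j * fderiv ℝ (fun w => g w j) z v) := by
  have hgj : ∀ j, DifferentiableAt ℝ (fun w => g w j) z := fun j =>
    (differentiableAt_pi.mp hg) j
  rw [fderiv_fun_sum fun j _ => (hgj j).fun_mul (differentiableAt_apply j z), sum_apply]
  refine Finset.sum_congr rfl fun j _ => ?_
  rw [fderiv_fun_mul (hgj j) (differentiableAt_apply j z), (hasFDerivAt_apply j z).fderiv]
  simp [smul_eq_mul]

theorem fderiv_sum_mul_apply_of_eq_single [DecidableEq ι] {g : (ι → ℂ) → ι → ℂ} {i₀ i₁ : ι}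
    {c : ℂ} (hg : DifferentiableAt ℝ g (Pi.single i₁ c))
    (hg₀ : g (Pi.single i₁ c) = Pi.single i₀ 1) (v : ι → ℂ) :
    fderiv ℝ (fun w => ∑ j, g w j * w j) (Pi.single i₁ c) v =
      v i₀ + c * fderiv ℝ (fun w => g w i₁) (Pi.single i₁ c) v := by
  simp [fderiv_sum_mul_apply hg, Finset.sum_add_distrib, hg₀, Pi.single_apply]

theorem fderiv_apply_of_eq_single [DecidableEq ι] {ρ : (ι → ℂ) → ℝ} {dρ : (ι → ℂ) → ι → ℂ}
    (hgrad : ∀ w v, fderiv ℝ ρ w v = 2 * (∑ j, dρ w j * v j).re) {z : ι → ℂ} {i₀ : ι}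
    (hz : dρ z = Pi.single i₀ 1) (v : ι → ℂ) :
    fderiv ℝ ρ z v = 2 * (v i₀).re := by
  simp only [hgrad, hz, Pi.single_apply, ite_mul, one_mul, zero_mul, Finset.sum_ite_eq',
    Finset.mem_univ, if_true]

theorem fderiv_fderiv_apply_single [DecidableEq ι] {ρ : (ι → ℂ) → ℝ} {dρ : (ι → ℂ) → ι → ℂ}
    (hgrad : ∀ w v, fderiv ℝ ρ w v = 2 * (∑ j, dρ w j * v j).re) {z : ι → ℂ} {i : ι}
    (hρ : DifferentiableAt ℝ (fderiv ℝ ρ) z) (hdρ : DifferentiableAt ℝ (fun w => dρ w i) z)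
    (u : ℂ) :
    fderiv ℝ (fderiv ℝ ρ) z (Pi.single i u) (Pi.single i u) =
      2 * (fderiv ℝ (fun w => dρ w i) z (Pi.single i u) * u).re := by
  have hrestrict : (fun w => fderiv ℝ ρ w (Pi.single i u)) = fun w => 2 * (dρ w i * u).re := by
    funext w
    simp [hgrad, Pi.single_apply]
  have h₁ : HasFDerivAt (fun w => fderiv ℝ ρ w (Pi.single i u))
      (apply ℝ ℝ (Pi.single i u) ∘L fderiv ℝ (fderiv ℝ ρ) z) z :=
    (apply ℝ ℝ (Pi.single i u : ι → ℂ)).hasFDerivAt.comp z hρ.hasFDerivAt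
  have h₂ : HasFDerivAt (fun w => fderiv ℝ ρ w (Pi.single i u))
      ((2 : ℝ) • reCLM ∘L (fderiv ℝ (fun w => dρ w i) z).smulRight u) z := by
    rw [hrestrict]
    exact (reCLM.hasFDerivAt.comp z (hdρ.hasFDerivAt.mul_const' u)).const_mul 2
  simpa using congr($(h₁.unique h₂) (Pi.single i u))

end Coordinates

/-- Let `ρ : ℂⁿ → ℝ` be `C²` with holomorphic gradient `dρ` (so `Dρ_w(v) = 2 Re⟨∂ρ(w), v⟩`)
of class `C¹`, and let `z` be a point with `ρ(z) = 0`, normalized so that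
`∂ρ(z) = (1,0,…,0)` and `z = (0,c,0,…,0)` with `c ≠ 0`.  If the real Hessian of `ρ` at `z`
restricted to the complex `z₂`-line is positive definite, then the map
`r : ℂⁿ → ℝ³`, `r(w) = (ρ(w), Re(∂ρ(w)·w), Im(∂ρ(w)·w))`, has derivative of rank 3
(i.e. surjective differential) at `z`. -/
theorem stmt_8 (n : ℕ) (hn : 2 ≤ n) (ρ : (Fin n → ℂ) → ℝ)
    (dρ : (Fin n → ℂ) → Fin n → ℂ)
    (hρ : ContDiff ℝ 2 ρ) (hdρ : ContDiff ℝ 1 dρ)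
    (hgrad : ∀ z v : Fin n → ℂ, fderiv ℝ ρ z v = 2 * (∑ j, dρ z j * v j).re)
    (z : Fin n → ℂ) (c : ℂ) (hc : c ≠ 0)
    (hnorm1 : dρ z = fun j => if j = (⟨0, by omega⟩ : Fin n) then 1 else 0)
    (hnorm2 : z = fun j => if j = (⟨1, by omega⟩ : Fin n) then c else 0)
    (hHess : ∀ v : ℂ, v ≠ 0 →
      0 < fderiv ℝ (fun w => fderiv ℝ ρ w) z
            (fun j => if j = (⟨1, by omega⟩ : Fin n) then v else 0)
            (fun j => if j = (⟨1, by omega⟩ : Fin n) then v else 0))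
    (r : (Fin n → ℂ) → Fin 3 → ℝ)
    (hr : r = fun w => ![ρ w, (∑ j, dρ w j * w j).re, (∑ j, dρ w j * w j).im]) :
    Function.Surjective (fderiv ℝ r z) := by
  set i₀ : Fin n := ⟨0, by omega⟩
  set i₁ : Fin n := ⟨1, by omega⟩
  have hi : i₀ ≠ i₁ := by simp [i₀, i₁, Fin.ext_iff]
  have hsingle : ∀ (i : Fin n) (u : ℂ), (fun j => if j = i then u else 0) = Pi.single i u :=
    fun i u => funext fun j => (Pi.single_apply i u j).symm
  simp only [hsingle] at hnorm1 hnorm2 hHess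
  subst hnorm2 hr
  have hdρ' : Differentiable ℝ dρ := hdρ.differentiable one_ne_zero
  set F := fderiv ℝ (fun w => dρ w i₁) (Pi.single i₁ c)
  have hF : ∀ u ≠ 0, 0 < (F (Pi.single i₁ u) * u).re := fun u hu => by
    have hρ' := (hρ.fderiv_right (m := 1) le_rfl).differentiable one_ne_zero
    have := hHess u hu
    rw [fderiv_fderiv_apply_single hgrad (hρ' _) (differentiable_pi.mp hdρ' i₁ _)] at this
    linarith
  have hFsurj := LinearMap.surjective_of_forall_re_mul_pos
    (F.toLinearMap ∘ₗ LinearMap.single ℝ (fun _ => ℂ) i₁) hF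
  rw [(hasFDerivAt_vecCons_re_im ((hρ.differentiable two_ne_zero) _)
    ((Differentiable.fun_sum fun j _ =>
      (differentiable_pi.mp hdρ' j).fun_mul (differentiable_apply j)) _)).fderiv]
  have hℓ := fderiv_apply_of_eq_single hgrad hnorm1
  refine surjective_pi_re_im (e := Pi.single i₀ 1) (by simp [hℓ]) fun w => ?_
  obtain ⟨u, hu⟩ := hFsurj (w / c)
  refine ⟨Pi.single i₁ u, by simp [hℓ, hi], ?_⟩
  rw [fderiv_sum_mul_apply_of_eq_single (hdρ' _) hnorm1, Pi.single_eq_of_ne hi, zero_add]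
  exact hu ▸ mul_div_cancel₀ w hc
end

section
/- Let M ⊂ R^N be a compact totally real C^1 submanifold identified locally with a graph over R^d, and let F be continuous on M. Define the Gaussian convolutions F̂_ν(ξ) = (ν/π)^{d/2} ∫_{R^d} F(η) e^{−ν(η−ξ)²} dV(η) in local coordinates. Then F̂_ν → F uniformly on compact subsets of M. -/
/-!
The normalized Gaussians `(ν/π)^{d/2} e^{-ν|v|²}` form an approximate identity: they are
nonnegative, have total mass one, and their mass outside any ball `|v| < δ` is at most
`e^{δ²} ν^{d/2} e^{-δ²ν} → 0`. Convolving a bounded, uniformly continuous `F` with an approximate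
identity converges to `F` uniformly: near `ξ` the oscillation of `F` is small, and far from `ξ`
the kernel carries little mass while `F` stays bounded.
-/

open Filter MeasureTheory Metric Topology Module

section ApproximateIdentity

variable {ι V E : Type*} [NormedAddCommGroup V] [MeasurableSpace V]

structure IsApproximateIdentity (k : ι → V → ℝ) (l : Filter ι) (μ : Measure V) : Prop where
  eventually_nonneg : ∀ᶠ i in l, 0 ≤ k i
  eventually_integrable : ∀ᶠ i in l, Integrable (k i) μ
  eventually_integral_eq_one : ∀ᶠ i in l, ∫ v, k i v ∂μ = 1
  tendsto_setIntegral_compl_ball :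
    ∀ δ > 0, Tendsto (fun i ↦ ∫ v in (ball 0 δ)ᶜ, k i v ∂μ) l (𝓝 0)

variable [BorelSpace V] [SecondCountableTopology V] [NormedAddCommGroup E] [NormedSpace ℝ E]
  [CompleteSpace E] {μ : Measure V} [μ.IsAddRightInvariant]

theorem norm_integral_comp_sub_smul_sub_le {g : V → ℝ} (hg0 : 0 ≤ g) (hg : Integrable g μ)
    (hg1 : ∫ v, g v ∂μ = 1) {F : V → E} (hF : Continuous F) {C : ℝ} (hC : ∀ x, ‖F x‖ ≤ C)
    {ξ : V} {δ ε : ℝ} (hε : 0 ≤ ε) (hδ : ∀ η, dist η ξ < δ → ‖F η - F ξ‖ ≤ ε) :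
    ‖∫ η, g (η - ξ) • F η ∂μ - F ξ‖ ≤ ε + 2 * C * ∫ v in (ball 0 δ)ᶜ, g v ∂μ := by
  have hgξ : Integrable (fun η ↦ g (η - ξ)) μ := hg.comp_sub_right ξ
  have hgF : Integrable (fun η ↦ g (η - ξ) • F η) μ :=
    hgξ.smul_bdd C hF.aestronglyMeasurable (ae_of_all _ hC)
  have htail : Integrable (fun η ↦ (ball 0 δ)ᶜ.indicator g (η - ξ)) μ :=
    (hg.indicator measurableSet_ball.compl).comp_sub_right ξ
  have hmass : ∫ η, g (η - ξ) ∂μ = 1 := by rw [integral_sub_right_eq_self, hg1]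
  have hbound : ∀ η, ‖g (η - ξ) • (F η - F ξ)‖
      ≤ ε * g (η - ξ) + 2 * C * (ball 0 δ)ᶜ.indicator g (η - ξ) := fun η ↦ by
    have hgη : 0 ≤ g (η - ξ) := hg0 _
    rw [norm_smul, Real.norm_of_nonneg hgη]
    by_cases hη : dist η ξ < δ
    · have hmem : η - ξ ∉ (ball 0 δ)ᶜ := by simpa [dist_eq_norm] using hη
      rw [Set.indicator_of_notMem hmem, mul_zero, add_zero, mul_comm]
      exact mul_le_mul_of_nonneg_right (hδ η hη) hgη
    · have hmem : η - ξ ∈ (ball 0 δ)ᶜ := by simpa [dist_eq_norm] using hη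
      have hosc : ‖F η - F ξ‖ ≤ 2 * C := by linarith [norm_sub_le (F η) (F ξ), hC η, hC ξ]
      rw [Set.indicator_of_mem hmem]
      nlinarith [mul_le_mul_of_nonneg_left hosc hgη, mul_nonneg hε hgη]
  calc ‖∫ η, g (η - ξ) • F η ∂μ - F ξ‖ = ‖∫ η, g (η - ξ) • (F η - F ξ) ∂μ‖ := by
        simp_rw [smul_sub]
        rw [integral_sub hgF (hgξ.smul_const _), integral_smul_const, hmass, one_smul]
    _ ≤ ∫ η, (ε * g (η - ξ) + 2 * C * (ball 0 δ)ᶜ.indicator g (η - ξ)) ∂μ :=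
        norm_integral_le_of_norm_le ((hgξ.const_mul ε).add (htail.const_mul _))
          (ae_of_all _ hbound)
    _ = ε + 2 * C * ∫ v in (ball 0 δ)ᶜ, g v ∂μ := by
        rw [integral_add (hgξ.const_mul ε) (htail.const_mul _), integral_const_mul,
          integral_const_mul, hmass, mul_one,
          integral_sub_right_eq_self (fun v ↦ (ball 0 δ)ᶜ.indicator g v),
          integral_indicator measurableSet_ball.compl]

theorem IsApproximateIdentity.tendstoUniformly_integral_comp_sub_smul {k : ι → V → ℝ}
    {l : Filter ι} (hk : IsApproximateIdentity k l μ) {F : V → E} (hF : UniformContinuous F)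
    {C : ℝ} (hC : ∀ x, ‖F x‖ ≤ C) :
    TendstoUniformly (fun i ξ ↦ ∫ η, k i (η - ξ) • F η ∂μ) F l := by
  rw [Metric.tendstoUniformly_iff]
  intro ε hε
  obtain ⟨δ, hδ, hFδ⟩ := Metric.uniformContinuous_iff.1 hF (ε / 2) (half_pos hε)
  have htail : ∀ᶠ i in l, 2 * C * ∫ v in (ball 0 δ)ᶜ, k i v ∂μ < ε / 2 := by
    have h := (hk.tendsto_setIntegral_compl_ball δ hδ).const_mul (2 * C)
    rw [mul_zero] at h
    exact h.eventually (gt_mem_nhds (half_pos hε))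
  filter_upwards [hk.eventually_nonneg, hk.eventually_integrable,
    hk.eventually_integral_eq_one, htail] with i hk0 hki hk1 hti ξ
  rw [dist_comm, dist_eq_norm]
  calc _ ≤ ε / 2 + 2 * C * ∫ v in (ball 0 δ)ᶜ, k i v ∂μ :=
        norm_integral_comp_sub_smul_sub_le hk0 hki hk1 hF.continuous hC (half_pos hε).le
          fun η hη ↦ (dist_eq_norm (F η) (F ξ) ▸ hFδ hη).le
    _ < ε := by linarith

end ApproximateIdentity

section Gaussian

variable (V : Type*) [NormedAddCommGroup V] [InnerProductSpace ℝ V]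

noncomputable def gaussianKernel (ν : ℝ) (v : V) : ℝ :=
  (ν / Real.pi) ^ (finrank ℝ V / 2 : ℝ) * Real.exp (-ν * ‖v‖ ^ 2)

variable {V}

theorem gaussianKernel_nonneg {ν : ℝ} (hν : 0 ≤ ν) : 0 ≤ gaussianKernel V ν := fun _ ↦
  mul_nonneg (Real.rpow_nonneg (div_nonneg hν Real.pi_pos.le) _) (Real.exp_pos _).le

theorem gaussianKernel_le_of_le_norm {ν δ : ℝ} (hν : 1 ≤ ν) (hδ : 0 ≤ δ) {v : V}
    (hv : δ ≤ ‖v‖) :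
    gaussianKernel V ν v ≤ Real.exp (δ ^ 2) * (ν ^ (finrank ℝ V / 2 : ℝ) *
      Real.exp (-δ ^ 2 * ν)) * gaussianKernel V 1 v := by
  have hexp : Real.exp (-ν * ‖v‖ ^ 2)
      ≤ Real.exp (δ ^ 2) * Real.exp (-δ ^ 2 * ν) * Real.exp (-1 * ‖v‖ ^ 2) := by
    rw [← Real.exp_add, ← Real.exp_add]
    apply Real.exp_le_exp.mpr
    nlinarith [mul_le_mul_of_nonneg_left (pow_le_pow_left₀ hδ hv 2) (sub_nonneg.mpr hν)]
  have hscale : (ν / Real.pi) ^ (finrank ℝ V / 2 : ℝ)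
      = ν ^ (finrank ℝ V / 2 : ℝ) * (1 / Real.pi) ^ (finrank ℝ V / 2 : ℝ) := by
    rw [← Real.mul_rpow (by positivity) (by positivity), mul_one_div]
  rw [gaussianKernel, gaussianKernel, hscale]
  calc _ ≤ ν ^ (finrank ℝ V / 2 : ℝ) * (1 / Real.pi) ^ (finrank ℝ V / 2 : ℝ) *
        (Real.exp (δ ^ 2) * Real.exp (-δ ^ 2 * ν) * Real.exp (-1 * ‖v‖ ^ 2)) :=
        mul_le_mul_of_nonneg_left hexp (by positivity)
    _ = _ := by ring

variable [FiniteDimensional ℝ V] [MeasurableSpace V] [BorelSpace V]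

theorem integral_gaussianKernel {ν : ℝ} (hν : 0 < ν) : ∫ v, gaussianKernel V ν v = 1 := by
  simp_rw [gaussianKernel]
  rw [integral_const_mul, GaussianFourier.integral_rexp_neg_mul_sq_norm hν,
    ← Real.mul_rpow (by positivity) (by positivity),
    div_mul_div_cancel₀ Real.pi_pos.ne', div_self hν.ne', Real.one_rpow]

theorem integrable_gaussianKernel {ν : ℝ} (hν : 0 < ν) : Integrable (gaussianKernel V ν) :=
  Integrable.of_integral_ne_zero (by rw [integral_gaussianKernel hν]; exact one_ne_zero)

theorem setIntegral_gaussianKernel_compl_ball_le {ν δ : ℝ} (hν : 1 ≤ ν) (hδ : 0 ≤ δ) :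
    ∫ v in (ball 0 δ)ᶜ, gaussianKernel V ν v
      ≤ Real.exp (δ ^ 2) * (ν ^ (finrank ℝ V / 2 : ℝ) * Real.exp (-δ ^ 2 * ν)) := by
  set c := Real.exp (δ ^ 2) * (ν ^ (finrank ℝ V / 2 : ℝ) * Real.exp (-δ ^ 2 * ν))
  have hint₁ := integrable_gaussianKernel (V := V) one_pos
  calc ∫ v in (ball 0 δ)ᶜ, gaussianKernel V ν v
      ≤ ∫ v in (ball 0 δ)ᶜ, c * gaussianKernel V 1 v :=
        setIntegral_mono_on (integrable_gaussianKernel (by linarith)).integrableOn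
          (hint₁.const_mul c).integrableOn measurableSet_ball.compl fun v hv ↦
            gaussianKernel_le_of_le_norm hν hδ (by simpa using hv)
    _ ≤ c * ∫ v, gaussianKernel V 1 v := by
        rw [integral_const_mul]
        exact mul_le_mul_of_nonneg_left
          (setIntegral_le_integral hint₁ (ae_of_all _ (gaussianKernel_nonneg zero_le_one)))
          (by positivity)
    _ = c := by rw [integral_gaussianKernel one_pos, mul_one]

theorem isApproximateIdentity_gaussianKernel :
    IsApproximateIdentity (gaussianKernel V) atTop volume where
  eventually_nonneg := (eventually_ge_atTop 0).mono fun _ ↦ gaussianKernel_nonneg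
  eventually_integrable := (eventually_gt_atTop 0).mono fun _ ↦ integrable_gaussianKernel
  eventually_integral_eq_one := (eventually_gt_atTop 0).mono fun _ ↦ integral_gaussianKernel
  tendsto_setIntegral_compl_ball δ hδ := by
    have hbound := (tendsto_rpow_mul_exp_neg_mul_atTop_nhds_zero (finrank ℝ V / 2 : ℝ) (δ ^ 2)
      (by positivity)).const_mul (Real.exp (δ ^ 2))
    rw [mul_zero] at hbound
    refine tendsto_of_tendsto_of_tendsto_of_le_of_le' tendsto_const_nhds hbound
      ((eventually_ge_atTop 0).mono fun ν hν ↦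
        setIntegral_nonneg measurableSet_ball.compl fun v _ ↦ gaussianKernel_nonneg hν v)
      ((eventually_ge_atTop 1).mono fun ν hν ↦ ?_)
    simpa [neg_mul] using setIntegral_gaussianKernel_compl_ball_le (V := V) hν hδ.le

end Gaussian

/-- Baouendi–Treves type Gaussian approximation, in the local coordinates identifying a
totally real manifold with `ℝᵈ`: for a continuous compactly supported `F : ℝᵈ → ℂ`, the
Gaussian convolutions `F̂_ν(ξ) = (ν/π)^{d/2} ∫_{ℝᵈ} F(η) e^{−ν|η−ξ|²} dV(η)` converge to
`F` uniformly on every compact set as `ν → ∞`. -/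
theorem stmt_14 (d : ℕ) (F : EuclideanSpace ℝ (Fin d) → ℂ)
    (hFc : Continuous F) (hFsupp : HasCompactSupport F)
    (Fhat : ℝ → EuclideanSpace ℝ (Fin d) → ℂ)
    (hFhat : ∀ ν : ℝ, 0 < ν → ∀ ξ, Fhat ν ξ =
      ((ν / Real.pi) ^ ((d : ℝ) / 2) : ℝ) •
        ∫ η : EuclideanSpace ℝ (Fin d), Real.exp (-ν * ‖η - ξ‖ ^ 2) • F η) :
    ∀ K : Set (EuclideanSpace ℝ (Fin d)), IsCompact K →
      TendstoUniformlyOn Fhat F atTop K := by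
  intro K _
  have hFhat_eq : Fhat =ᶠ[atTop] fun ν ξ ↦ ∫ η, gaussianKernel _ ν (η - ξ) • F η := by
    filter_upwards [eventually_gt_atTop 0] with ν hν
    ext ξ
    simp_rw [hFhat ν hν ξ, gaussianKernel, finrank_euclideanSpace_fin, mul_smul, integral_smul]
  obtain ⟨C, hC⟩ := hFc.bounded_above_of_compact_support hFsupp
  refine ((tendstoUniformly_congr hFhat_eq).mpr ?_).tendstoUniformlyOn
  exact isApproximateIdentity_gaussianKernel.tendstoUniformly_integral_comp_sub_smul
    (hFsupp.uniformContinuous_of_continuous hFc) hC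
end
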